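/- arXiv:1102.4132 — 3 statements merged into one kernel-verified Lean document; each statement's English description precedes it below -/
import Mathlib

section
/- Let V be a standard value-function candidate. If −p/α ≤ x₀ < x₁, (x₀, x₁] ⊆ B and x₀ ∉ B, then x₀ ∈ A. -/
open MeasureTheory Set Filter

noncomputable section

/-- Drift coefficient: c(x) = p + r x for x ≥ 0, c(x) = p + α x for x < 0. -/
def drift (p r a x : ℝ) : ℝ := if 0 ≤ x then p + r * x else p + a * x

/-- I_v(x) = ∫_{(0, x+p/α]} v(x−u) dμ(u). -/
def Iop (p a : ℝ) (mu : Measure ℝ) (v : ℝ → ℝ) (x : ℝ) : ℝ :=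
  ∫ u in Set.Ioc (0 : ℝ) (x + p / a), v (x - u) ∂mu

/-- L_{v,φ}(x) = c(x)·φ′(x) − (λ+δ)·v(x) + λ·I_v(x). -/
def Lphi (p lam d r a : ℝ) (mu : Measure ℝ) (v phi : ℝ → ℝ) (x : ℝ) : ℝ :=
  drift p r a x * deriv phi x - (lam + d) * v x + lam * Iop p a mu v x

/-- G_v(x) = c(x) − (λ+δ)·v(x) + λ·I_v(x). -/
def Gop (p lam d r a : ℝ) (mu : Measure ℝ) (v : ℝ → ℝ) (x : ℝ) : ℝ :=
  drift p r a x - (lam + d) * v x + lam * Iop p a mu v x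

/-- Viscosity sub-solution of the HJB equation on J ⊆ (−p/α,∞). -/
def IsViscSubsol (p lam d r a : ℝ) (mu : Measure ℝ) (u : ℝ → ℝ) (J : Set ℝ) : Prop :=
  ∀ x ∈ J, ∀ phi : ℝ → ℝ, ContDiff ℝ 1 phi → phi x = u x →
    (∀ y ∈ Set.Ici (-(p / a)), u y - phi y ≤ u x - phi x) →
    0 ≤ max (1 - deriv phi x) (Lphi p lam d r a mu u phi x)

/-- Viscosity super-solution of the HJB equation on J ⊆ (−p/α,∞). -/
def IsViscSupersol (p lam d r a : ℝ) (mu : Measure ℝ) (u : ℝ → ℝ) (J : Set ℝ) : Prop :=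
  ∀ x ∈ J, ∀ phi : ℝ → ℝ, ContDiff ℝ 1 phi → phi x = u x →
    (∀ y ∈ Set.Ici (-(p / a)), u x - phi x ≤ u y - phi y) →
    max (1 - deriv phi x) (Lphi p lam d r a mu u phi x) ≤ 0

/-- Viscosity solution: both sub- and super-solution. -/
def IsViscSol (p lam d r a : ℝ) (mu : Measure ℝ) (u : ℝ → ℝ) (J : Set ℝ) : Prop :=
  IsViscSubsol p lam d r a mu u J ∧ IsViscSupersol p lam d r a mu u J

/-- Locally Lipschitz on a set. -/
def LocLipOn (s : Set ℝ) (u : ℝ → ℝ) : Prop :=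
  ∀ x ∈ s, ∃ K : NNReal, ∃ eps : ℝ, 0 < eps ∧ LipschitzOnWith K u (s ∩ Metric.ball x eps)

/-- Linear growth bound on [−p/α,∞). -/
def LinGrowth (p a : ℝ) (u : ℝ → ℝ) : Prop :=
  ∃ c₁ c₂ : ℝ, ∀ x : ℝ, -(p / a) ≤ x → u x ≤ c₁ * x + c₂

/-- Standard value-function candidate. -/
structure IsCandidate (p lam d r a : ℝ) (mu : Measure ℝ) (V : ℝ → ℝ) : Prop where
  cont : ContinuousOn V (Set.Ici (-(p / a)))
  nonneg : ∀ x ∈ Set.Ici (-(p / a)), 0 ≤ V x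
  mono : MonotoneOn V (Set.Ici (-(p / a)))
  boundary : V (-(p / a)) = 0
  slope : ∀ x y : ℝ, -(p / a) ≤ x → x ≤ y → y - x ≤ V y - V x
  growth : ∀ x : ℝ, 0 ≤ x → V x ≤ (d * x + p) / (d - r) + p / a
  locLip : LocLipOn (Set.Ioi (-(p / a))) V
  visc : IsViscSol p lam d r a mu V (Set.Ioi (-(p / a)))
  derivLim : ∀ x ∈ Set.Ioi (-(p / a)), ∀ (h : ℕ → ℝ) (dd : ℝ),
      ((∀ n, 0 < h n) ∨ (∀ n, h n < 0)) →
      Filter.Tendsto h Filter.atTop (nhds 0) →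
      Filter.Tendsto (fun n => (V (x + h n) - V x) / h n) Filter.atTop (nhds dd) →
      1 ≤ dd ∧ dd * drift p r a x - (lam + d) * V x + lam * Iop p a mu V x ≤ 0

/-- The set A = {x ∈ [−p/α,∞) : G_V(x) = 0}. -/
def setA (p lam d r a : ℝ) (mu : Measure ℝ) (V : ℝ → ℝ) : Set ℝ :=
  {x | x ∈ Set.Ici (-(p / a)) ∧ Gop p lam d r a mu V x = 0}

/-- The set B = {x ∈ [−p/α,∞) : V′(x) exists, V′(x) = 1 and G_V(x) < 0}. -/
def setB (p lam d r a : ℝ) (mu : Measure ℝ) (V : ℝ → ℝ) : Set ℝ :=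
  {x | x ∈ Set.Ici (-(p / a)) ∧ DifferentiableAt ℝ V x ∧ deriv V x = 1 ∧
      Gop p lam d r a mu V x < 0}

/-- The set C = [−p/α,∞) \ (A ∪ B). -/
def setC (p lam d r a : ℝ) (mu : Measure ℝ) (V : ℝ → ℝ) : Set ℝ :=
  Set.Ici (-(p / a)) \ (setA p lam d r a mu V ∪ setB p lam d r a mu V)

/-!
On `(x₀, x₁]` the candidate has slope one, so it is affine there and the right difference
quotients at `x₀` force `G_V(x₀) ≤ 0`.  If `G_V(x₀) < 0`, then for every `k > 1` close to `1`
the function `V - k·id` cannot increase just to the left of `x₀`: otherwise its maximum on a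
short interval `[y, x₀]` would be touched from above by a `C¹` function of slope `k`, penalised
quadratically to the left of `y` and to the right of `x₀`, and the sub-solution property would
contradict `k·c - (λ+δ)V + λI_V < 0`.  Hence `V` has derivative `1` at `x₀`, i.e. `x₀ ∈ B`.
The boundary point `-p/α` lies in `A` because `c`, `V` and `I_V` all vanish there.
-/

open Topology

lemma hasDerivAt_max_zero_sq (x : ℝ) :
    HasDerivAt (fun t : ℝ => max t 0 ^ 2) (2 * max x 0) x := by
  refine hasDerivAt_of_hasDerivAt_of_ne' (f := fun t : ℝ => max t 0 ^ 2)
    (g := fun x => 2 * max x 0) (x := 0) (fun y hy => ?_) (by fun_prop) (by fun_prop) x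
  rcases hy.lt_or_gt with hy | hy
  · have hloc : (fun t : ℝ => max t 0 ^ 2) =ᶠ[𝓝 y] fun _ => 0 := by
      filter_upwards [Iio_mem_nhds hy] with t (ht : t < 0)
      simp [max_eq_right ht.le]
    simpa [max_eq_right hy.le] using (hasDerivAt_const y (0 : ℝ)).congr_of_eventuallyEq hloc
  · have hloc : (fun t : ℝ => max t 0 ^ 2) =ᶠ[𝓝 y] fun t => t ^ 2 := by
      filter_upwards [Ioi_mem_nhds hy] with t (ht : 0 < t)
      rw [max_eq_left ht.le]
    simpa [max_eq_left hy.le, mul_comm] using (hasDerivAt_pow 2 y).congr_of_eventuallyEq hloc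

lemma contDiff_max_zero_sq : ContDiff ℝ 1 (fun t : ℝ => max t 0 ^ 2) := by
  refine contDiff_one_iff_deriv.2 ⟨fun x => (hasDerivAt_max_zero_sq x).differentiableAt, ?_⟩
  rw [funext fun x => (hasDerivAt_max_zero_sq x).deriv]
  fun_prop

lemma mul_le_sq_div_add {η : ℝ} (hη : 0 < η) (c s : ℝ) :
    c * s ≤ c ^ 2 / (4 * η) * s ^ 2 + η := by
  have hsq : c ^ 2 / (4 * η) * s ^ 2 + η - c * s = (c * s - 2 * η) ^ 2 / (4 * η) := by
    field_simp
    ring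
  have : 0 ≤ (c * s - 2 * η) ^ 2 / (4 * η) := by positivity
  linarith

lemma exists_le_mul_sq_of_le_affine {f : ℝ → ℝ} {x₀ x₁ b c : ℝ} (hx : x₀ < x₁)
    (hnear : ∀ ξ ∈ Icc x₀ x₁, f ξ ≤ 0) (hfar : ∀ ξ, x₀ ≤ ξ → f ξ ≤ b * (ξ - x₀) + c) :
    ∃ M, ∀ ξ, x₀ ≤ ξ → f ξ ≤ M * (ξ - x₀) ^ 2 := by
  have hτ : 0 < x₁ - x₀ := sub_pos.2 hx
  set K := |b| + |c| / (x₁ - x₀)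
  have hK : 0 ≤ K := add_nonneg (abs_nonneg b) (div_nonneg (abs_nonneg c) hτ.le)
  refine ⟨K / (x₁ - x₀), fun ξ hξ => ?_⟩
  rcases le_or_gt ξ x₁ with hξ₁ | hξ₁
  · exact (hnear ξ ⟨hξ, hξ₁⟩).trans (mul_nonneg (div_nonneg hK hτ.le) (sq_nonneg _))
  · have hs : 1 ≤ (ξ - x₀) / (x₁ - x₀) := (one_le_div hτ).2 (by linarith)
    have hs0 : 0 ≤ ξ - x₀ := sub_nonneg.2 hξ
    calc f ξ ≤ b * (ξ - x₀) + c := hfar ξ hξ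
      _ ≤ |b| * (ξ - x₀) + |c| * ((ξ - x₀) / (x₁ - x₀)) := by
          gcongr
          · exact le_abs_self b
          · exact (le_abs_self c).trans (le_mul_of_one_le_right (abs_nonneg c) hs)
      _ = K * (ξ - x₀) := by ring
      _ ≤ K * (ξ - x₀) * ((ξ - x₀) / (x₁ - x₀)) :=
          le_mul_of_one_le_right (mul_nonneg hK hs0) hs
      _ = K / (x₁ - x₀) * (ξ - x₀) ^ 2 := by ring

lemma eq_add_mul_sub_of_hasDerivAt {f : ℝ → ℝ} {x₀ x₁ c : ℝ}
    (hcont : ContinuousOn f (Icc x₀ x₁)) (hderiv : ∀ x ∈ Ioc x₀ x₁, HasDerivAt f c x) :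
    ∀ x ∈ Ioc x₀ x₁, f x = f x₀ + c * (x - x₀) := by
  intro x hx
  obtain ⟨ξ, hξ, hslope⟩ := exists_hasDerivAt_eq_slope f (fun _ => c) hx.1
    (hcont.mono (Icc_subset_Icc_right hx.2)) fun t ht => hderiv t ⟨ht.1, ht.2.le.trans hx.2⟩
  rw [eq_div_iff (sub_ne_zero.2 hx.1.ne')] at hslope
  linarith

lemma drift_monotone {p r a : ℝ} (hr : 0 ≤ r) (ha : 0 ≤ a) : Monotone (drift p r a) := by
  intro x y hxy
  unfold drift
  split_ifs <;> nlinarith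

lemma drift_pos {p r a x : ℝ} (hp : 0 < p) (hr : 0 ≤ r) (ha : 0 < a) (hx : -(p / a) < x) :
    0 < drift p r a x := by
  have hpx : -p < x * a := by rwa [← neg_div, div_lt_iff₀ ha] at hx
  unfold drift
  split_ifs <;> nlinarith

lemma drift_neg_div {p r a : ℝ} (hp : 0 < p) (ha : 0 < a) : drift p r a (-(p / a)) = 0 := by
  rw [drift, if_neg (not_le.2 (neg_neg_of_pos (div_pos hp ha)))]
  field_simp
  ring

lemma IsViscSubsol.le_of_le_of_hasDerivAt {p lam d r a : ℝ} {mu : Measure ℝ} {u φ : ℝ → ℝ}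
    {J : Set ℝ} {x k : ℝ} (hu : IsViscSubsol p lam d r a mu u J) (hx : x ∈ J)
    (hφ : ContDiff ℝ 1 φ) (hφx : φ x = u x) (hle : ∀ y ∈ Ici (-(p / a)), u y ≤ φ y)
    (hderiv : HasDerivAt φ k x) (hk : 1 < k) :
    0 ≤ drift p r a x * k - (lam + d) * u x + lam * Iop p a mu u x := by
  have h := hu x hx φ hφ hφx fun y hy => by linarith [hle y hy]
  rw [Lphi, hderiv.deriv, le_max_iff] at h
  exact h.resolve_left (by linarith)

namespace IsCandidate

variable {p lam d r a : ℝ} {mu : Measure ℝ} {V : ℝ → ℝ}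

lemma gop_neg_div (hV : IsCandidate p lam d r a mu V) (hp : 0 < p) (ha : 0 < a) :
    Gop p lam d r a mu V (-(p / a)) = 0 := by
  simp [Gop, Iop, drift_neg_div hp ha, hV.boundary]

lemma integrableOn_comp_sub [IsFiniteMeasureOnCompacts mu] (hV : IsCandidate p lam d r a mu V)
    {z : ℝ} : IntegrableOn (fun u => V (z - u)) (Ioc 0 (z + p / a)) mu := by
  refine (ContinuousOn.integrableOn_compact isCompact_Icc ?_).mono_set Ioc_subset_Icc_self
  exact hV.cont.comp (by fun_prop) fun u hu => by simp only [mem_Ici]; linarith [hu.2]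

lemma monotoneOn_Iop [IsFiniteMeasureOnCompacts mu] (hV : IsCandidate p lam d r a mu V) :
    MonotoneOn (Iop p a mu V) (Ici (-(p / a))) := by
  intro z hz z' _ hzz'
  calc ∫ u in Ioc 0 (z + p / a), V (z - u) ∂mu
      ≤ ∫ u in Ioc 0 (z + p / a), V (z' - u) ∂mu := by
        refine setIntegral_mono_on hV.integrableOn_comp_sub
          (hV.integrableOn_comp_sub.mono_set (Ioc_subset_Ioc_right (by linarith)))
          measurableSet_Ioc fun u hu => hV.mono ?_ ?_ (by linarith)
        all_goals simp only [mem_Ici]; linarith [hu.2]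
    _ ≤ ∫ u in Ioc 0 (z' + p / a), V (z' - u) ∂mu := by
        refine setIntegral_mono_set hV.integrableOn_comp_sub ?_
          (Ioc_subset_Ioc_right (by linarith)).eventuallyLE
        rw [EventuallyLE, ae_restrict_iff' measurableSet_Ioc]
        exact ae_of_all _ fun u hu => hV.nonneg _ (by simp only [mem_Ici]; linarith [hu.2])

lemma linGrowth (hV : IsCandidate p lam d r a mu V) : LinGrowth p a V := by
  set c₁ := max (d / (d - r)) 0
  refine ⟨c₁, p / (d - r) + p / a + c₁ * |p / a|, fun x hx => ?_⟩
  have hc₁ : 0 ≤ c₁ := le_max_right _ _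
  have hgrowth : ∀ x, 0 ≤ x → V x ≤ d / (d - r) * x + p / (d - r) + p / a := fun x h0 => by
    simpa [add_div, mul_div_right_comm] using hV.growth x h0
  have habs : -(c₁ * |p / a|) ≤ c₁ * x := by
    rw [← mul_neg]; exact mul_le_mul_of_nonneg_left ((neg_le_neg (le_abs_self _)).trans hx) hc₁
  have hpos : 0 ≤ c₁ * |p / a| := mul_nonneg hc₁ (abs_nonneg _)
  rcases le_or_gt 0 x with h0 | h0
  · have : d / (d - r) * x ≤ c₁ * x := mul_le_mul_of_nonneg_right (le_max_left _ _) h0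
    linarith [hgrowth x h0]
  · have : V x ≤ V 0 := hV.mono hx (mem_Ici.2 (hx.trans h0.le)) h0.le
    linarith [hgrowth 0 le_rfl]

lemma gop_nonpos (hV : IsCandidate p lam d r a mu V) {x₀ x₁ : ℝ} (hx₀ : -(p / a) < x₀)
    (hx : x₀ < x₁) (hlin : ∀ x ∈ Ioc x₀ x₁, V x = V x₀ + (x - x₀)) :
    Gop p lam d r a mu V x₀ ≤ 0 := by
  set h : ℕ → ℝ := fun n => (x₁ - x₀) * (1 / ((n : ℝ) + 1))
  have hpos : ∀ n, 0 < h n := fun n => mul_pos (sub_pos.2 hx) (by positivity)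
  have hmem : ∀ n, x₀ + h n ∈ Ioc x₀ x₁ := fun n => by
    have : 1 / ((n : ℝ) + 1) ≤ 1 := (div_le_one (by positivity)).2 (by simp)
    constructor <;> nlinarith [hpos n]
  have hquot : ∀ n, (V (x₀ + h n) - V x₀) / h n = 1 := fun n => by
    rw [hlin _ (hmem n), div_eq_one_iff_eq (hpos n).ne']
    ring
  have hlim : Tendsto h atTop (𝓝 0) := by
    have := tendsto_one_div_add_atTop_nhds_zero_nat.const_mul (x₁ - x₀)
    rwa [mul_zero] at this
  have := (hV.derivLim x₀ hx₀ h 1 (Or.inl hpos) hlim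
    (tendsto_const_nhds.congr fun n => (hquot n).symm)).2
  rw [Gop]
  linarith

lemma exists_testFunction (hV : IsCandidate p lam d r a mu V) {y z x₀ x₁ k : ℝ}
    (hy : -(p / a) ≤ y) (hz : z ∈ Icc y x₀) (hx : x₀ < x₁) (hk : 1 ≤ k)
    (hlin : ∀ x ∈ Ioc x₀ x₁, V x = V x₀ + (x - x₀))
    (hmax : ∀ ξ ∈ Icc y x₀, V ξ - k * ξ ≤ V z - k * z) (hgap : V y - k * y < V z - k * z) :
    ∃ φ : ℝ → ℝ, ContDiff ℝ 1 φ ∧ φ z = V z ∧ HasDerivAt φ k z ∧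
      ∀ ξ ∈ Ici (-(p / a)), V ξ ≤ φ ξ := by
  set A := V z - k * z
  set η := A - (V y - k * y)
  have hη : 0 < η := sub_pos.2 hgap
  obtain ⟨c₁, c₂, hgrowth⟩ := hV.linGrowth
  obtain ⟨M, hM⟩ := exists_le_mul_sq_of_le_affine (f := fun ξ => V ξ - (A + k * ξ)) hx
    (b := c₁ - k) (c := (c₁ - k) * x₀ + c₂ - A)
    (fun ξ hξ => by
      rcases hξ.1.eq_or_lt with hξ₀ | hξ₀
      · rw [← hξ₀]; linarith [hmax x₀ ⟨hz.1.trans hz.2, le_rfl⟩]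
      · have := hmax x₀ ⟨hz.1.trans hz.2, le_rfl⟩
        rw [hlin ξ ⟨hξ₀, hξ.2⟩]
        nlinarith)
    (fun ξ hξ => by
      have := hgrowth ξ (by linarith [hz.1, hz.2])
      linear_combination this)
  -- Left of `y` the slope bound gives `V ξ - (A + k ξ) ≤ (k - 1) (y - ξ) - η`, and this `N` makes
  -- `(k - 1) s ≤ N s² + η` by AM-GM.
  set N := (k - 1) ^ 2 / (4 * η)
  refine ⟨fun t => A + k * t + M * max (t - x₀) 0 ^ 2 + N * max (y - t) 0 ^ 2, ?_, ?_, ?_, ?_⟩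
  · exact ((contDiff_const.add (contDiff_const.mul contDiff_id)).add
      (contDiff_const.mul (contDiff_max_zero_sq.comp (contDiff_id.sub contDiff_const)))).add
      (contDiff_const.mul (contDiff_max_zero_sq.comp (contDiff_const.sub contDiff_id)))
  · simp [max_eq_right (sub_nonpos.2 hz.2), max_eq_right (sub_nonpos.2 hz.1), A]
  · have h₁ := (hasDerivAt_max_zero_sq (z - x₀)).comp z ((hasDerivAt_id z).sub_const x₀)
    have h₂ := (hasDerivAt_max_zero_sq (y - z)).comp z ((hasDerivAt_id z).const_sub y)
    refine (((((hasDerivAt_id z).const_mul k).const_add A).add (h₁.const_mul M)).add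
      (h₂.const_mul N)).congr_deriv ?_
    simp [max_eq_right (sub_nonpos.2 hz.2), max_eq_right (sub_nonpos.2 hz.1)]
  · intro ξ hξ
    rcases lt_or_ge ξ y with hξy | hyξ
    · have hslope := hV.slope ξ y hξ hξy.le
      have hamgm := mul_le_sq_div_add hη (k - 1) (y - ξ)
      simp only [max_eq_right (sub_nonpos.2 (hξy.le.trans (hz.1.trans hz.2))),
        max_eq_left (sub_nonneg.2 hξy.le)]
      linarith
    rcases le_or_gt ξ x₀ with hξx | hxξ
    · simp only [max_eq_right (sub_nonpos.2 hξx), max_eq_right (sub_nonpos.2 hyξ)]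
      linarith [hmax ξ ⟨hyξ, hξx⟩]
    · simp only [max_eq_left (sub_nonneg.2 hxξ.le),
        max_eq_right (sub_nonpos.2 ((hz.1.trans hz.2).trans hxξ.le))]
      linarith [hM ξ hxξ.le]

lemma sub_le_mul_sub (hV : IsCandidate p lam d r a mu V) {y x₀ x₁ k : ℝ}
    (hy : -(p / a) < y) (hyx : y < x₀) (hx : x₀ < x₁) (hk : 1 < k)
    (hlin : ∀ x ∈ Ioc x₀ x₁, V x = V x₀ + (x - x₀))
    (hneg : ∀ z ∈ Icc y x₀, drift p r a z * k - (lam + d) * V z + lam * Iop p a mu V z < 0) :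
    V x₀ - V y ≤ k * (x₀ - y) := by
  by_contra hgap
  have hcont : ContinuousOn (fun t => V t - k * t) (Icc y x₀) :=
    (hV.cont.mono fun t ht => mem_Ici.2 (hy.le.trans ht.1)).sub (by fun_prop)
  obtain ⟨z, hz, hmax⟩ := isCompact_Icc.exists_isMaxOn (nonempty_Icc.2 hyx.le) hcont
  have hmax' : ∀ ξ ∈ Icc y x₀, V ξ - k * ξ ≤ V z - k * z := fun ξ hξ => isMaxOn_iff.1 hmax ξ hξ
  have hgap' : V y - k * y < V z - k * z := by
    linarith [hmax' x₀ (right_mem_Icc.2 hyx.le)]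
  obtain ⟨φ, hφ, hφz, hφ', hle⟩ :=
    hV.exists_testFunction hy.le hz hx hk.le hlin hmax' hgap'
  exact (hneg z hz).not_ge
    (hV.visc.1.le_of_le_of_hasDerivAt (hy.trans_le hz.1) hφ hφz hle hφ' hk)

lemma eventually_sub_le_mul_sub [IsFiniteMeasureOnCompacts mu]
    (hV : IsCandidate p lam d r a mu V) (hr : 0 ≤ r) (ha : 0 ≤ a) (hlam : 0 ≤ lam)
    {x₀ x₁ k : ℝ} (hx₀ : -(p / a) < x₀) (hx : x₀ < x₁) (hk : 1 < k)
    (hlin : ∀ x ∈ Ioc x₀ x₁, V x = V x₀ + (x - x₀))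
    (hneg : drift p r a x₀ * k - (lam + d) * V x₀ + lam * Iop p a mu V x₀ < 0) :
    ∀ᶠ y in 𝓝[<] x₀, V x₀ - V y ≤ k * (x₀ - y) := by
  have hVx₀ : ContinuousAt V x₀ := (hV.cont x₀ hx₀.le).continuousAt (Ici_mem_nhds hx₀)
  have hev : ∀ᶠ z in 𝓝[≤] x₀, -(p / a) < z ∧
      drift p r a x₀ * k - (lam + d) * V z + lam * Iop p a mu V x₀ < 0 := by
    refine nhdsWithin_le_nhds ((eventually_gt_nhds hx₀).and ?_)
    exact ContinuousAt.eventually_lt (by fun_prop) continuousAt_const hneg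
  obtain ⟨l, hl, hsub⟩ := mem_nhdsLE_iff_exists_Ioc_subset.1 hev
  filter_upwards [Ioo_mem_nhdsLT hl] with y hy
  refine hV.sub_le_mul_sub (hsub ⟨hy.1, hy.2.le⟩).1 hy.2 hx hk hlin fun z hz => ?_
  obtain ⟨hz₀, hzneg⟩ := hsub ⟨hy.1.trans_le hz.1, hz.2⟩
  have hdrift : drift p r a z ≤ drift p r a x₀ := drift_monotone hr ha hz.2
  have hI : Iop p a mu V z ≤ Iop p a mu V x₀ :=
    hV.monotoneOn_Iop (mem_Ici.2 hz₀.le) (mem_Ici.2 hx₀.le) hz.2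
  nlinarith

lemma hasDerivAt_one [IsFiniteMeasureOnCompacts mu] (hV : IsCandidate p lam d r a mu V)
    (hp : 0 < p) (hr : 0 ≤ r) (ha : 0 < a) (hlam : 0 ≤ lam) {x₀ x₁ : ℝ} (hx₀ : -(p / a) < x₀)
    (hx : x₀ < x₁) (hlin : ∀ x ∈ Ioc x₀ x₁, V x = V x₀ + (x - x₀))
    (hG : Gop p lam d r a mu V x₀ < 0) : HasDerivAt V 1 x₀ := by
  rw [hasDerivAt_iff_tendsto_slope, ← nhdsLT_sup_nhdsGT, tendsto_sup]
  constructor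
  · refine tendsto_order.2 ⟨fun b hb => ?_, fun b hb => ?_⟩
    · filter_upwards [self_mem_nhdsWithin, nhdsWithin_le_nhds (eventually_gt_nhds hx₀)]
        with y (hy : y < x₀) hy₀
      rw [slope_def_field, lt_div_iff_of_neg (sub_neg.2 hy)]
      nlinarith [hV.slope y x₀ hy₀.le hy.le]
    · have hc := drift_pos hp hr ha hx₀
      set c := drift p r a x₀
      set G := Gop p lam d r a mu V x₀ with hGdef
      have hGc : G / (2 * c) < 0 := div_neg_of_neg_of_pos hG (by linarith)
      set k := min ((1 + b) / 2) (1 - G / (2 * c))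
      have hk : 1 < k := lt_min (by linarith) (by linarith)
      have hkb : k < b := (min_le_left _ _).trans_lt (by linarith)
      have hneg : c * k - (lam + d) * V x₀ + lam * Iop p a mu V x₀ < 0 := by
        have hkc : (k - 1) * c ≤ -G / 2 :=
          calc (k - 1) * c ≤ -(G / (2 * c)) * c := by
                gcongr
                linarith [min_le_right ((1 + b) / 2) (1 - G / (2 * c))]
            _ = -G / 2 := by field_simp
        rw [hGdef, Gop] at hkc hG
        linarith
      filter_upwards [self_mem_nhdsWithin,
        hV.eventually_sub_le_mul_sub hr ha.le hlam hx₀ hx hk hlin hneg] with y (hy : y < x₀) hky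
      rw [slope_def_field, div_lt_iff_of_neg (sub_neg.2 hy)]
      nlinarith
  · refine tendsto_const_nhds.congr' ?_
    filter_upwards [Ioc_mem_nhdsGT hx] with y hy
    rw [slope_def_field, hlin y hy, eq_div_iff (sub_ne_zero.2 hy.1.ne')]
    ring

end IsCandidate

theorem stmt16_general
    (p lam d r a : ℝ) (hp : 0 < p) (hlam : 0 < lam)
    (hr : 0 < r) (hra : r < a)
    (mu : Measure ℝ) [IsProbabilityMeasure mu]
    (V : ℝ → ℝ) (hV : IsCandidate p lam d r a mu V)
    (x₀ x₁ : ℝ) (hx₀ : -(p / a) ≤ x₀) (hlt : x₀ < x₁)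
    (hB : Set.Ioc x₀ x₁ ⊆ setB p lam d r a mu V)
    (hnB : x₀ ∉ setB p lam d r a mu V) :
    x₀ ∈ setA p lam d r a mu V := by
  have ha : 0 < a := hr.trans hra
  refine ⟨hx₀, ?_⟩
  rcases hx₀.eq_or_lt with hbd | hx₀
  · rw [← hbd]
    exact hV.gop_neg_div hp ha
  have hlin : ∀ x ∈ Ioc x₀ x₁, V x = V x₀ + (x - x₀) := by
    simpa only [one_mul] using eq_add_mul_sub_of_hasDerivAt (c := 1)
      (hV.cont.mono ((Icc_subset_Ici_iff hlt.le).2 hx₀.le)) fun x hx => by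
        obtain ⟨-, hdiff, hderiv, -⟩ := hB hx
        exact hderiv ▸ hdiff.hasDerivAt
  refine (hV.gop_nonpos hx₀ hlt hlin).antisymm (not_lt.1 fun hG => hnB ?_)
  have hV' := hV.hasDerivAt_one hp hr.le ha hlam.le hx₀ hlt hlin hG
  exact ⟨hx₀.le, hV'.differentiableAt, hV'.deriv, hG⟩

theorem stmt16
    (p lam d r a : ℝ) (hp : 0 < p) (hlam : 0 < lam) (hd : 0 < d)
    (hr : 0 < r) (hra : r < a) (hrd : r < d)
    (mu : Measure ℝ) [IsProbabilityMeasure mu] (hmu : mu (Set.Iic 0) = 0)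
    (V : ℝ → ℝ) (hV : IsCandidate p lam d r a mu V)
    (x₀ x₁ : ℝ) (hx₀ : -(p / a) ≤ x₀) (hlt : x₀ < x₁)
    (hB : Set.Ioc x₀ x₁ ⊆ setB p lam d r a mu V)
    (hnB : x₀ ∉ setB p lam d r a mu V) :
    x₀ ∈ setA p lam d r a mu V :=
  stmt16_general p lam d r a hp hlam hr hra mu V hV x₀ x₁ hx₀ hlt hB hnB
end
end

section
/- Let V be a standard value-function candidate and let y ∈ (−p/α,∞). Define G_y : [−p/α,∞) → ℝ by G_y(x) = V(x) for x ≤ y and G_y(x) = V(y) + (x − y) for x > y. Then G_y is a viscosity super-solution of the HJB equation on (−p/α, y]. -/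
open MeasureTheory Set Filter

noncomputable section

section

variable {p lam d r a : ℝ} {mu : Measure ℝ}

theorem IsViscSupersol.mono {u : ℝ → ℝ} {J J' : Set ℝ}
    (hu : IsViscSupersol p lam d r a mu u J') (hJ : J ⊆ J') :
    IsViscSupersol p lam d r a mu u J :=
  fun x hx => hu x (hJ hx)

theorem Iop_congr_of_eqOn_Iic {u v : ℝ → ℝ} {x : ℝ} (h : EqOn u v (Iic x)) :
    Iop p a mu u x = Iop p a mu v x :=
  setIntegral_congr_fun measurableSet_Ioc fun t ht => h (by simp only [mem_Iic]; linarith [ht.1])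

theorem Lphi_congr_of_eqOn_Iic {u v : ℝ → ℝ} (phi : ℝ → ℝ) {x : ℝ} (h : EqOn u v (Iic x)) :
    Lphi p lam d r a mu u phi x = Lphi p lam d r a mu v phi x := by
  rw [Lphi, Lphi, h self_mem_Iic, Iop_congr_of_eqOn_Iic h]

/-- A test function touching `u` from below at `x` also touches the larger `v` there, and the
HJB operator only sees values on `(-∞, x]`, where `u` and `v` agree. -/
theorem IsViscSupersol.of_le_of_eqOn_Iic {u v : ℝ → ℝ} {J : Set ℝ}
    (hv : IsViscSupersol p lam d r a mu v J) (hle : ∀ z ∈ Ici (-(p / a)), u z ≤ v z)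
    (heq : ∀ x ∈ J, EqOn u v (Iic x)) :
    IsViscSupersol p lam d r a mu u J := by
  intro x hx phi hphi hphix hmin
  have hux : u x = v x := heq x hx self_mem_Iic
  rw [Lphi_congr_of_eqOn_Iic phi (heq x hx)]
  refine hv x hx phi hphi (hphix.trans hux) fun z hz => ?_
  linarith [hmin z hz, hle z hz]

end

theorem ite_le_of_sub_le_sub {V : ℝ → ℝ} {y : ℝ} (hslope : ∀ z, y ≤ z → z - y ≤ V z - V y)
    (z : ℝ) : (if z ≤ y then V z else V y + (z - y)) ≤ V z := by
  split_ifs with hzy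
  · exact le_rfl
  · linarith [hslope z (le_of_not_ge hzy)]

theorem stmt18_general
    (p lam d r a : ℝ)
    (mu : Measure ℝ)
    (V : ℝ → ℝ) (hV : IsCandidate p lam d r a mu V)
    (y : ℝ) :
    IsViscSupersol p lam d r a mu
      (fun x => if x ≤ y then V x else V y + (x - y))
      (Set.Ioc (-(p / a)) y) := by
  intro x hx
  have hy : -(p / a) ≤ y := hx.1.le.trans hx.2
  exact (hV.visc.2.mono Ioc_subset_Ioi_self).of_le_of_eqOn_Iic
    (fun z _ => ite_le_of_sub_le_sub (fun z hz => hV.slope y z hy hz) z)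
    (fun x hx z hz => if_pos (mem_Iic.mp hz |>.trans hx.2)) x hx

theorem stmt18
    (p lam d r a : ℝ) (hp : 0 < p) (hlam : 0 < lam) (hd : 0 < d)
    (hr : 0 < r) (hra : r < a) (hrd : r < d)
    (mu : Measure ℝ) [IsProbabilityMeasure mu] (hmu : mu (Set.Iic 0) = 0)
    (V : ℝ → ℝ) (hV : IsCandidate p lam d r a mu V)
    (y : ℝ) (hy : -(p / a) < y) :
    IsViscSupersol p lam d r a mu
      (fun x => if x ≤ y then V x else V y + (x - y))
      (Set.Ioc (-(p / a)) y) :=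
  stmt18_general p lam d r a mu V hV y
end
end

section
/- Let V be a standard value-function candidate and let y ∈ (−p/α,∞). Define G_y : [−p/α,∞) → ℝ by G_y(x) = V(x) for x ≤ y and G_y(x) = V(y) + (x − y) for x > y. If G_y is a viscosity super-solution of the HJB equation on (y, ∞), then G_y(x) = V(x) for all x ∈ [−p/α, ∞). -/
open MeasureTheory Set Filter

noncomputable section

/-! If `V` exceeded the extension `G_y` somewhere right of `y`, the excess `V - G_y`, which grows
at most linearly, divided by the weight `⟨z + p/r⟩^s = (1 + (z + p/r)²)^(s/2)` with `1 < s < δ/r`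
attains a positive maximum `g` at some `x* > y`. There `V y + (z - y) + g⟨z + p/r⟩^s` touches `V`
from above with slope `> 1`, while `V y + (z - y) - k (z - x*)²` touches `G_y` from below with
slope `1`. Subtracting the super-solution inequality of `G_y` from the sub-solution inequality of
`V`, the nonlocal terms differ by at most `λ g⟨x* + p/r⟩^s`, and what remains is
`δ⟨·⟩^s ≤ c · (⟨·⟩^s)' ≤ s r ⟨·⟩^s` at `x* + p/r`, using `c(z) ≤ r (z + p/r)`; this contradicts
`s r < δ`. -/

open Asymptotics Topology

def bracketPow (s w : ℝ) : ℝ := (1 + w ^ 2) ^ (s / 2)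

lemma bracketPow_pos (s w : ℝ) : 0 < bracketPow s w :=
  Real.rpow_pos_of_pos (by positivity) _

lemma contDiff_bracketPow (s : ℝ) {n : WithTop ℕ∞} : ContDiff ℝ n (bracketPow s) :=
  (contDiff_const.add (contDiff_id.pow 2)).rpow_const_of_ne fun w => by positivity

lemma hasDerivAt_bracketPow (s w : ℝ) :
    HasDerivAt (bracketPow s) (s * w * (1 + w ^ 2) ^ (s / 2 - 1)) w := by
  have hbase : HasDerivAt (fun v : ℝ => 1 + v ^ 2) (2 * w) w := by
    simpa using (hasDerivAt_pow 2 w).const_add 1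
  have h := hbase.rpow_const (p := s / 2) (Or.inl (by positivity))
  rwa [show 2 * w * (s / 2) = s * w by ring] at h

lemma bracketPow_le_bracketPow {s w v : ℝ} (hs : 0 ≤ s) (hw : 0 ≤ w) (hwv : w ≤ v) :
    bracketPow s w ≤ bracketPow s v :=
  Real.rpow_le_rpow (by positivity) (by gcongr) (by positivity)

lemma rpow_le_bracketPow {s w : ℝ} (hs : 0 ≤ s) (hw : 0 ≤ w) : w ^ s ≤ bracketPow s w := by
  have hw2 : w ^ s = (w ^ 2) ^ (s / 2) := by
    rw [← Real.rpow_natCast, ← Real.rpow_mul hw]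
    congr 1
    ring
  rw [hw2]
  exact Real.rpow_le_rpow (by positivity) (by linarith) (by positivity)

lemma mul_deriv_bracketPow_le {s : ℝ} (hs : 0 ≤ s) (w : ℝ) :
    w * (s * w * (1 + w ^ 2) ^ (s / 2 - 1)) ≤ s * bracketPow s w := by
  have h1 : (0 : ℝ) < 1 + w ^ 2 := by positivity
  rw [Real.rpow_sub_one h1.ne', bracketPow]
  have h2 : w * (s * w * ((1 + w ^ 2) ^ (s / 2) / (1 + w ^ 2)))
      = s * (1 + w ^ 2) ^ (s / 2) * (w ^ 2 / (1 + w ^ 2)) := by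
    field_simp
  rw [h2]
  have h3 : w ^ 2 / (1 + w ^ 2) ≤ 1 := (div_le_one h1).2 (by linarith)
  have h4 : 0 ≤ s * (1 + w ^ 2) ^ (s / 2) := by positivity
  nlinarith

lemma isLittleO_id_rpow_atTop {s : ℝ} (hs : 1 < s) :
    (fun w : ℝ => w) =o[atTop] fun w => w ^ s := by
  refine (isLittleO_iff_tendsto' ?_).2 ?_
  · filter_upwards [eventually_gt_atTop 0] with w hw h
    exact absurd h (Real.rpow_pos_of_pos hw s).ne'
  · refine (tendsto_rpow_neg_atTop (by linarith : 0 < s - 1)).congr' ?_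
    filter_upwards [eventually_gt_atTop 0] with w hw
    rw [neg_sub, Real.rpow_sub hw, Real.rpow_one]

lemma tendsto_affine_div_bracketPow {s : ℝ} (hs : 1 < s) (A B : ℝ) :
    Tendsto (fun w => (A * w + B) / bracketPow s w) atTop (𝓝 0) := by
  have haff : (fun w : ℝ => A * w + B) =O[atTop] fun w => w :=
    (isBigO_refl _ _).const_mul_left A |>.add (isLittleO_const_id_atTop B).isBigO
  have hpow : (fun w : ℝ => w ^ s) =O[atTop] bracketPow s := by
    refine IsBigO.of_bound 1 ?_
    filter_upwards [eventually_ge_atTop 0] with w hw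
    rw [Real.norm_of_nonneg (Real.rpow_nonneg hw s),
      Real.norm_of_nonneg (bracketPow_pos s w).le, one_mul]
    exact rpow_le_bracketPow (by linarith) hw
  exact ((haff.trans_isLittleO (isLittleO_id_rpow_atTop hs)).trans_isBigO hpow)
    |>.tendsto_div_nhds_zero

lemma drift_le {p r a : ℝ} (hra : r ≤ a) (x : ℝ) : drift p r a x ≤ p + r * x := by
  unfold drift
  split_ifs <;> nlinarith

lemma ContinuousOn.exists_isMaxOn_Ici {f : ℝ → ℝ} {y x₀ : ℝ} (hf : ContinuousOn f (Ici y))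
    (hx₀ : y ≤ x₀) (htail : ∀ᶠ z in atTop, f z ≤ f x₀) : ∃ x ∈ Ici y, IsMaxOn f (Ici y) x := by
  refine hf.exists_isMaxOn' isClosed_Ici hx₀ ?_
  rw [cocompact_eq_atBot_atTop, inf_sup_right, eventually_sup]
  refine ⟨eventually_inf_principal.2 ?_, htail.filter_mono inf_le_left⟩
  filter_upwards [eventually_lt_atBot y] with z hz hz'
  exact absurd hz' (not_le.2 hz)

section Iop

variable {p a : ℝ} {mu : Measure ℝ}

lemma integrableOn_Iop [IsFiniteMeasure mu] {f : ℝ → ℝ} (hf : ContinuousOn f (Ici (-(p / a))))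
    (x : ℝ) : IntegrableOn (fun u => f (x - u)) (Ioc 0 (x + p / a)) mu := by
  have hcont : ContinuousOn (fun u => f (x - u)) (Icc 0 (x + p / a)) :=
    hf.comp (continuous_const.sub continuous_id).continuousOn fun u hu => by
      simp only [mem_Ici]; linarith [hu.2]
  exact (hcont.integrableOn_compact isCompact_Icc).mono_set Ioc_subset_Icc_self

lemma Iop_sub_Iop_le [IsProbabilityMeasure mu] {f g : ℝ → ℝ}
    (hf : ContinuousOn f (Ici (-(p / a)))) (hg : ContinuousOn g (Ici (-(p / a)))) {x B : ℝ}
    (hB : 0 ≤ B) (hfg : ∀ z, -(p / a) ≤ z → z ≤ x → f z - g z ≤ B) :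
    Iop p a mu f x - Iop p a mu g x ≤ B := by
  rw [Iop, Iop, ← integral_sub (integrableOn_Iop hf x) (integrableOn_Iop hg x)]
  calc ∫ u in Ioc 0 (x + p / a), (f (x - u) - g (x - u)) ∂mu
      ≤ ∫ _ in Ioc 0 (x + p / a), B ∂mu :=
        setIntegral_mono_on ((integrableOn_Iop hf x).sub (integrableOn_Iop hg x))
          (integrableOn_const) measurableSet_Ioc fun u hu =>
            hfg _ (by linarith [hu.2]) (by linarith [hu.1])
    _ = mu.real (Ioc 0 (x + p / a)) * B := by rw [setIntegral_const, smul_eq_mul]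
    _ ≤ B := mul_le_of_le_one_left hB measureReal_le_one

end Iop

section Viscosity

variable {p lam d r a : ℝ} {mu : Measure ℝ} {u φ : ℝ → ℝ} {J : Set ℝ} {x : ℝ}

lemma IsViscSubsol.nonneg_Lphi (hu : IsViscSubsol p lam d r a mu u J) (hx : x ∈ J)
    (hφ : ContDiff ℝ 1 φ) (hφx : φ x = u x) (hle : ∀ z ∈ Ici (-(p / a)), u z ≤ φ z)
    (hφ' : 1 < deriv φ x) : 0 ≤ Lphi p lam d r a mu u φ x :=
  (le_max_iff.1 (hu x hx φ hφ hφx fun z hz => by linarith [hle z hz])).resolve_left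
    (by linarith)

lemma IsViscSupersol.Lphi_nonpos (hu : IsViscSupersol p lam d r a mu u J) (hx : x ∈ J)
    (hφ : ContDiff ℝ 1 φ) (hφx : φ x = u x) (hle : ∀ z ∈ Ici (-(p / a)), φ z ≤ u z) :
    Lphi p lam d r a mu u φ x ≤ 0 :=
  (le_max_right _ _).trans (hu x hx φ hφ hφx fun z hz => by linarith [hle z hz])

end Viscosity

def slopeOneExtension (V : ℝ → ℝ) (y : ℝ) : ℝ → ℝ :=
  fun x => if x ≤ y then V x else V y + (x - y)

section SlopeOneExtension

variable {p lam d r a : ℝ} {mu : Measure ℝ} {V : ℝ → ℝ} {x y : ℝ}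

lemma slopeOneExtension_of_le (hx : x ≤ y) : slopeOneExtension V y x = V x := if_pos hx

lemma slopeOneExtension_of_lt (hx : y < x) : slopeOneExtension V y x = V y + (x - y) :=
  if_neg (not_le.2 hx)

lemma slopeOneExtension_eq_comp_min (V : ℝ → ℝ) (y : ℝ) :
    slopeOneExtension V y = fun z => V (min z y) + max (z - y) 0 := by
  ext z
  rcases le_or_gt z y with hz | hz
  · rw [slopeOneExtension_of_le hz, min_eq_left hz, max_eq_right (by linarith), add_zero]
  · rw [slopeOneExtension_of_lt hz, min_eq_right hz.le, max_eq_left (by linarith)]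

lemma continuousOn_slopeOneExtension {c : ℝ} (hV : ContinuousOn V (Ici c)) (hy : c ≤ y) :
    ContinuousOn (slopeOneExtension V y) (Ici c) := by
  rw [slopeOneExtension_eq_comp_min]
  refine (hV.comp (continuous_id.min continuous_const).continuousOn fun z hz => ?_).add
    (by fun_prop)
  exact le_min hz hy

lemma Gop_slopeOneExtension_nonpos (hV0 : ∀ z ∈ Ici (-(p / a)), 0 ≤ V z) (hy : -(p / a) ≤ y)
    (hsuper : IsViscSupersol p lam d r a mu (slopeOneExtension V y) (Ioi y)) (hx : y < x) :
    Gop p lam d r a mu (slopeOneExtension V y) x ≤ 0 := by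
  set k := V y / (x - y) ^ 2
  have hxy : 0 < (x - y) ^ 2 := by nlinarith
  have hk : 0 ≤ k := div_nonneg (hV0 y hy) hxy.le
  have hkV : k * (x - y) ^ 2 = V y := div_mul_cancel₀ _ hxy.ne'
  set φ : ℝ → ℝ := fun z => V y + (z - y) - k * (z - x) ^ 2
  have hφ' : HasDerivAt φ 1 x := by
    have h := (((hasDerivAt_id' x).sub_const y).const_add (V y)).fun_sub
      ((((hasDerivAt_id' x).sub_const x).fun_pow 2).const_mul k)
    simpa using h
  have hle : ∀ z ∈ Ici (-(p / a)), φ z ≤ slopeOneExtension V y z := by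
    intro z hz
    rcases le_or_gt z y with hzy | hzy
    · rw [slopeOneExtension_of_le hzy]
      have hsq : (x - y) ^ 2 ≤ (z - x) ^ 2 := by nlinarith
      nlinarith [hV0 z hz, mul_le_mul_of_nonneg_left hsq hk]
    · rw [slopeOneExtension_of_lt hzy]
      nlinarith [mul_nonneg hk (sq_nonneg (z - x))]
  have h := hsuper.Lphi_nonpos hx (by fun_prop) (by simp [φ, slopeOneExtension_of_lt hx]) hle
  rwa [Lphi, hφ'.deriv, mul_one] at h

end SlopeOneExtension

namespace IsCandidate

variable {p lam d r a : ℝ} {mu : Measure ℝ} {V : ℝ → ℝ} {y : ℝ}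

lemma tendsto_sub_div_bracketPow (hV : IsCandidate p lam d r a mu V) (hy : -(p / a) ≤ y)
    {s : ℝ} (hs : 1 < s) (M : ℝ) :
    Tendsto (fun z => (V z - (V y + (z - y))) / bracketPow s (z + M)) atTop (𝓝 0) := by
  set A := d / (d - r) - 1
  set B := p / (d - r) + p / a - V y + y
  have hupper :
      Tendsto (fun z => (A * (z + M) + (B - A * M)) / bracketPow s (z + M)) atTop (𝓝 0) :=
    (tendsto_affine_div_bracketPow hs A (B - A * M)).comp
      (tendsto_atTop_add_const_right _ M tendsto_id)
  refine tendsto_of_tendsto_of_tendsto_of_le_of_le' tendsto_const_nhds hupper ?_ ?_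
  · filter_upwards [eventually_ge_atTop y] with z hz
    exact div_nonneg (by linarith [hV.slope y z hy hz]) (bracketPow_pos s _).le
  · filter_upwards [eventually_ge_atTop 0] with z hz
    gcongr
    · exact (bracketPow_pos s _).le
    · have h := hV.growth z hz
      have hsplit : (d * z + p) / (d - r) = d / (d - r) * z + p / (d - r) := by ring
      linarith

lemma nonpos_of_touching_bracketPow [IsProbabilityMeasure mu] (hV : IsCandidate p lam d r a mu V)
    (hp : 0 ≤ p) (hr : 0 < r) (hra : r ≤ a) (hlam : 0 ≤ lam) {s : ℝ} (hs : 0 < s)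
    (hsd : s * r < d) (hy : -(p / a) ≤ y)
    (hsuper : IsViscSupersol p lam d r a mu (slopeOneExtension V y) (Ioi y)) {xs g : ℝ}
    (hxs : y < xs)
    (htouch : ∀ z ∈ Ici (-(p / a)), V z ≤ V y + (z - y) + g * bracketPow s (z + p / r))
    (heq : V xs = V y + (xs - y) + g * bracketPow s (xs + p / r)) : g ≤ 0 := by
  by_contra! hg
  have hpa : p / a ≤ p / r := div_le_div_of_nonneg_left hp hr hra
  set w := xs + p / r
  set E := bracketPow s w
  set E' := s * w * (1 + w ^ 2) ^ (s / 2 - 1)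
  have hw : 0 < w := by linarith
  have hE : 0 < E := bracketPow_pos s w
  have hE' : 0 < E' := by positivity
  have hφ : HasDerivAt (fun z => V y + (z - y) + g * bracketPow s (z + p / r)) (1 + g * E') xs :=
    ((hasDerivAt_id' xs).sub_const y |>.const_add (V y)).fun_add
      (((hasDerivAt_bracketPow s w).comp_add_const xs (p / r)).const_mul g)
  have hφc : ContDiff ℝ 1 (fun z => V y + (z - y) + g * bracketPow s (z + p / r)) :=
    (contDiff_const.add (contDiff_id.sub contDiff_const)).add
      (contDiff_const.mul ((contDiff_bracketPow s).comp (contDiff_id.add contDiff_const)))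
  have hsub := hV.visc.1.nonneg_Lphi (mem_Ioi.2 (by linarith)) hφc heq.symm htouch
    (by rw [hφ.deriv]; nlinarith)
  have hsup := Gop_slopeOneExtension_nonpos hV.nonneg hy hsuper hxs
  have hI : Iop p a mu V xs - Iop p a mu (slopeOneExtension V y) xs ≤ g * E := by
    refine Iop_sub_Iop_le hV.cont (continuousOn_slopeOneExtension hV.cont hy) (by positivity)
      fun z hz hzx => ?_
    rcases le_or_gt z y with hzy | hzy
    · rw [slopeOneExtension_of_le hzy, sub_self]
      positivity
    · rw [slopeOneExtension_of_lt hzy]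
      have hmono := bracketPow_le_bracketPow hs.le (by linarith : 0 ≤ z + p / r)
        (by linarith : z + p / r ≤ w)
      nlinarith [htouch z hz]
  have hdrift : drift p r a xs * E' ≤ s * r * E :=
    calc drift p r a xs * E' ≤ r * w * E' := by
          gcongr
          calc drift p r a xs ≤ p + r * xs := drift_le hra xs
            _ = r * w := by rw [mul_add, mul_div_cancel₀ _ hr.ne']; ring
      _ = r * (w * E') := by ring
      _ ≤ r * (s * E) := mul_le_mul_of_nonneg_left (mul_deriv_bracketPow_le hs.le w) hr.le
      _ = s * r * E := by ring
  rw [Lphi, hφ.deriv] at hsub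
  rw [Gop, slopeOneExtension_of_lt hxs] at hsup
  rw [heq] at hsub
  linarith [mul_le_mul_of_nonneg_left hI hlam, mul_le_mul_of_nonneg_left hdrift hg.le,
    mul_lt_mul_of_pos_left hsd (mul_pos hg hE)]

lemma le_of_isViscSupersol_slopeOneExtension [IsProbabilityMeasure mu]
    (hV : IsCandidate p lam d r a mu V) (hp : 0 ≤ p) (hr : 0 < r) (hra : r ≤ a) (hrd : r < d)
    (hlam : 0 ≤ lam) (hy : -(p / a) ≤ y)
    (hsuper : IsViscSupersol p lam d r a mu (slopeOneExtension V y) (Ioi y)) {x : ℝ}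
    (hx : y < x) : V x ≤ V y + (x - y) := by
  obtain ⟨s, hs, hsd⟩ : ∃ s, 1 < s ∧ s < d / r := exists_between ((one_lt_div hr).2 hrd)
  set q := fun z => (V z - (V y + (z - y))) / bracketPow s (z + p / r)
  by_contra! hlt
  have hqx : 0 < q x := div_pos (by linarith) (bracketPow_pos s _)
  have hq : ContinuousOn q (Ici y) :=
    ((hV.cont.mono (Ici_subset_Ici.2 hy)).sub (by fun_prop)).div
      ((contDiff_bracketPow s (n := 0)).continuous.comp (continuous_add_const _)).continuousOn
      fun z _ => (bracketPow_pos s _).ne'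
  obtain ⟨xs, hxs, hmax⟩ := hq.exists_isMaxOn_Ici hx.le
    ((hV.tendsto_sub_div_bracketPow hy hs (p / r)).eventually (ge_mem_nhds hqx))
  have hqxs : q x ≤ q xs := hmax (mem_Ici.2 hx.le)
  have hqy : q y = 0 := by simp [q]
  have hyxs : y < xs := lt_of_le_of_ne hxs fun h => by rw [← h, hqy] at hqxs; linarith
  refine absurd (hV.nonpos_of_touching_bracketPow hp hr hra hlam (by linarith)
    ((lt_div_iff₀ hr).1 hsd) hy hsuper hyxs (g := q xs) (fun z hz => ?_) ?_) (by linarith)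
  · rcases le_or_gt z y with hzy | hzy
    · nlinarith [hV.slope z y hz hzy, bracketPow_pos s (z + p / r), hqx]
    · have hqz : (V z - (V y + (z - y))) / bracketPow s (z + p / r) ≤ q xs :=
        hmax (mem_Ici.2 hzy.le)
      rw [div_le_iff₀ (bracketPow_pos s _)] at hqz
      linarith
  · simp only [q]
    rw [div_mul_cancel₀ _ (bracketPow_pos s _).ne']
    ring

end IsCandidate

theorem stmt19_general
    (p lam d r a : ℝ) (hp : 0 < p) (hlam : 0 < lam)
    (hr : 0 < r) (hra : r < a) (hrd : r < d)
    (mu : Measure ℝ) [IsProbabilityMeasure mu]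
    (V : ℝ → ℝ) (hV : IsCandidate p lam d r a mu V)
    (y : ℝ) (hy : -(p / a) < y)
    (hsuper : IsViscSupersol p lam d r a mu
      (fun x => if x ≤ y then V x else V y + (x - y)) (Set.Ioi y)) :
    ∀ x : ℝ, -(p / a) ≤ x →
      (if x ≤ y then V x else V y + (x - y)) = V x := by
  intro x _
  split_ifs with hxy
  · rfl
  · have hyx : y < x := not_le.1 hxy
    exact le_antisymm (by linarith [hV.slope y x hy.le hyx.le])
      (hV.le_of_isViscSupersol_slopeOneExtension hp.le hr hra.le hrd hlam.le hy.le hsuper hyx)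

theorem stmt19
    (p lam d r a : ℝ) (hp : 0 < p) (hlam : 0 < lam) (hd : 0 < d)
    (hr : 0 < r) (hra : r < a) (hrd : r < d)
    (mu : Measure ℝ) [IsProbabilityMeasure mu] (hmu : mu (Set.Iic 0) = 0)
    (V : ℝ → ℝ) (hV : IsCandidate p lam d r a mu V)
    (y : ℝ) (hy : -(p / a) < y)
    (hsuper : IsViscSupersol p lam d r a mu
      (fun x => if x ≤ y then V x else V y + (x - y)) (Set.Ioi y)) :
    ∀ x : ℝ, -(p / a) ≤ x →
      (if x ≤ y then V x else V y + (x - y)) = V x :=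
  stmt19_general p lam d r a hp hlam hr hra hrd mu V hV y hy hsuper
end
end
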